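/- Let j ≥ 2, let k₁, …, k_j ≥ 2, let A_{k_i} be real n × n^{k_i−1} matrices with vector fields f_{k_i}(x) = A_{k_i} x^{[k_i−1]}, and let g(x) = C x for a real m × n matrix C. Then for every x ∈ ℝⁿ, L_{f_{k_j}} ⋯ L_{f_{k₂}} L_{f_{k₁}} g(x) = C A_{k₁} B_{k₂k₁} B_{k₃k₂k₁} ⋯ B_{k_j ⋯ k₂k₁} x^{[k₁+⋯+k_j − (2j−1)]}, where for each 2 ≤ p ≤ j, B_{k_p ⋯ k₂k₁} = Σ_{i=1}^{N_p} I ⊗ ⋯ ⊗ A_{k_p} ⊗ ⋯ ⊗ I with N_p = k₁+⋯+k_{p−1} − (2p−3), the i-th summand being a Kronecker product of N_p factors in which A_{k_p} occupies the i-th factor and all other factors are the n × n identity matrix I. -/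

import Mathlib

/-!
By the product rule, the derivative of `y ↦ y^{[N]}` at `x` in the direction `v` is
`∑_{i<N} x^{[i]} ⊗ v ⊗ x^{[N-1-i]}`. Hence the Lie derivative of `y ↦ M y^{[N]}` along
`f(y) = A y^{[k-1]}` is `M` applied to this sum with `v = A x^{[k-1]}`, and the mixed-product rule
`(I ⊗ A ⊗ I)(x^{[i]} ⊗ x^{[k-1]} ⊗ x^{[N-1-i]}) = x^{[i]} ⊗ A x^{[k-1]} ⊗ x^{[N-1-i]}` rewrites it
as `M B x^{[N+k-2]}`. Starting from `L_{f_{k₁}} g(x) = C A_{k₁} x^{[k₁-1]}`, each further Lie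
derivative therefore appends one factor `B` and raises the Kronecker power by `k - 2`.
-/

open Matrix BigOperators

noncomputable section

/-- Kronecker product of (column) vectors. -/
def vkron {a b : ℕ} (u : Fin a → ℝ) (v : Fin b → ℝ) : Fin (a * b) → ℝ :=
  fun i => u (finProdFinEquiv.symm i).1 * v (finProdFinEquiv.symm i).2

/-- Cast a vector along an equality of dimensions. -/
def castV {a b : ℕ} (h : a = b) (v : Fin a → ℝ) : Fin b → ℝ :=
  fun i => v (Fin.cast h.symm i)

/-- `vpow x m = x ⊗ x ⊗ ⋯ ⊗ x` (`m` factors), the `m`-fold Kronecker power. -/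
def vpow {n : ℕ} (x : Fin n → ℝ) : (m : ℕ) → Fin (n ^ m) → ℝ
  | 0 => fun _ => 1
  | m + 1 => castV (pow_succ' n m).symm (vkron x (vpow x m))

/-- Kronecker product of matrices. -/
def mkron {a b c d : ℕ} (A : Matrix (Fin a) (Fin b) ℝ) (B : Matrix (Fin c) (Fin d) ℝ) :
    Matrix (Fin (a * c)) (Fin (b * d)) ℝ :=
  fun i j =>
    A (finProdFinEquiv.symm i).1 (finProdFinEquiv.symm j).1 *
      B (finProdFinEquiv.symm i).2 (finProdFinEquiv.symm j).2

/-- Cast a matrix along equalities of dimensions. -/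
def castM {a b a' b' : ℕ} (ha : a = a') (hb : b = b')
    (M : Matrix (Fin a) (Fin b) ℝ) : Matrix (Fin a') (Fin b') ℝ :=
  fun i j => M (Fin.cast ha.symm i) (Fin.cast hb.symm j)

/-- `Bmat k N hk A = Σ_{i=1}^{N} I^{⊗(i-1)} ⊗ A ⊗ I^{⊗(N-i)}`, where `A` is `n × n^(k-1)`
and `I` is the `n × n` identity; the result is an `n^N × n^(N+k-2)` matrix. -/
def Bmat {n : ℕ} (k N : ℕ) (hk : 2 ≤ k) (A : Matrix (Fin n) (Fin (n ^ (k - 1))) ℝ) :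
    Matrix (Fin (n ^ N)) (Fin (n ^ (N + k - 2))) ℝ :=
  ∑ i : Fin N,
    castM (by have := i.isLt; rw [← pow_succ', ← pow_add]; congr 1; omega)
      (by have := i.isLt; have := hk; rw [← pow_add, ← pow_add]; congr 1; omega)
      (mkron (1 : Matrix (Fin (n ^ (i : ℕ))) (Fin (n ^ (i : ℕ))) ℝ)
        (mkron A (1 : Matrix (Fin (n ^ (N - 1 - (i : ℕ)))) (Fin (n ^ (N - 1 - (i : ℕ)))) ℝ)))

/-- Lie derivative of an output map along a vector field. -/
def lieD {n m : ℕ} (f : (Fin n → ℝ) → Fin n → ℝ) (φ : (Fin n → ℝ) → Fin m → ℝ) :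
    (Fin n → ℝ) → Fin m → ℝ :=
  fun x => fderiv ℝ φ x (f x)

/-- Iterated Lie derivative `L_f^j φ`. -/
def lieIter {n m : ℕ} (f : (Fin n → ℝ) → Fin n → ℝ) (φ : (Fin n → ℝ) → Fin m → ℝ) :
    ℕ → (Fin n → ℝ) → Fin m → ℝ
  | 0 => φ
  | j + 1 => lieD f (lieIter f φ j)

/-- The product `B_{k₂k₁} B_{k₃k₂k₁} ⋯ B_{k_{p+1}⋯k₂k₁}`, as an
`n^(k₁-1) × n^(k₁+⋯+k_{p+1}-(2(p+1)-1))` matrix (`Mchain k hk A 0` is the empty product);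
indices here are 0-based, so `k 0 = k₁`, `k 1 = k₂`, …. -/
def Mchain {n : ℕ} (k : ℕ → ℕ) (hk : ∀ i, 2 ≤ k i)
    (A : (i : ℕ) → Matrix (Fin n) (Fin (n ^ (k i - 1))) ℝ) :
    (p : ℕ) → Matrix (Fin (n ^ (k 0 - 1)))
      (Fin (n ^ ((∑ t ∈ Finset.range (p + 1), k t) - (2 * (p + 1) - 1)))) ℝ
  | 0 => castM rfl (by congr 1)
      (1 : Matrix (Fin (n ^ (k 0 - 1))) (Fin (n ^ (k 0 - 1))) ℝ)
  | p + 1 =>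
      castM rfl
        (by
          congr 1
          have h2 : (∑ t ∈ Finset.range (p + 1 + 1), k t) =
              (∑ t ∈ Finset.range (p + 1), k t) + k (p + 1) :=
            Finset.sum_range_succ k (p + 1)
          have h3 : 2 * (p + 1) ≤ ∑ t ∈ Finset.range (p + 1), k t := by
            calc 2 * (p + 1) = ∑ _t ∈ Finset.range (p + 1), 2 := by
                  rw [Finset.sum_const, Finset.card_range]; ring
              _ ≤ ∑ t ∈ Finset.range (p + 1), k t := Finset.sum_le_sum fun i _ => hk i
          have h4 := hk (p + 1)
          omega)
        (Mchain k hk A p *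
          Bmat (k (p + 1)) ((∑ t ∈ Finset.range (p + 1), k t) - (2 * (p + 1) - 1))
            (hk (p + 1)) (A (p + 1)))

/-- The iterated mixed Lie derivative `L_{F(j-1)} ⋯ L_{F 1} L_{F 0} g`. -/
def mLieN {n m : ℕ} (F : ℕ → (Fin n → ℝ) → Fin n → ℝ) (g : (Fin n → ℝ) → Fin m → ℝ) :
    ℕ → (Fin n → ℝ) → Fin m → ℝ
  | 0 => g
  | p + 1 => lieD (F p) (mLieN F g p)

/-- Coordinate `t` of `v`, read as `0` out of range. Flat natural-number indices make the
dimension casts `castV` invisible and turn Kronecker identities into `/` and `%` arithmetic. -/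
def vget {a : ℕ} (v : Fin a → ℝ) (t : ℕ) : ℝ := if h : t < a then v ⟨t, h⟩ else 0

section FlatIndex

variable {a b c : ℕ}

lemma vget_of_ge (v : Fin a → ℝ) {t : ℕ} (h : a ≤ t) : vget v t = 0 := by
  simp [vget, Nat.not_lt.2 h]

lemma eq_of_vget_eq {u v : Fin a → ℝ} (h : ∀ t : ℕ, vget u t = vget v t) : u = v := by
  funext i
  simpa [vget, i.isLt] using h i

lemma vget_castV (h : a = b) (v : Fin a → ℝ) (t : ℕ) : vget (castV h v) t = vget v t := by
  subst h; rfl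

lemma vget_add (u w : Fin a → ℝ) (t : ℕ) : vget (u + w) t = vget u t + vget w t := by
  by_cases h : t < a <;> simp [vget, h]

lemma vget_sum {ι : Type*} (s : Finset ι) (F : ι → Fin a → ℝ) (t : ℕ) :
    vget (∑ i ∈ s, F i) t = ∑ i ∈ s, vget (F i) t := by
  by_cases h : t < a <;> simp [vget, h]

lemma vget_vkron (u : Fin a → ℝ) (v : Fin b → ℝ) (t : ℕ) :
    vget (vkron u v) t = vget u (t / b) * vget v (t % b) := by
  rcases Nat.eq_zero_or_pos b with rfl | hb
  · rw [vget_of_ge (a := a * 0) _ (by simp), vget_of_ge v (Nat.zero_le _), mul_zero]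
  by_cases ht : t < a * b
  · have h1 : t / b < a := Nat.div_lt_of_lt_mul (by rwa [mul_comm] at ht)
    have h2 : t % b < b := Nat.mod_lt _ hb
    have hdiv : (finProdFinEquiv.symm ⟨t, ht⟩).1 = ⟨t / b, h1⟩ := Fin.ext (Fin.coe_divNat _)
    have hmod : (finProdFinEquiv.symm ⟨t, ht⟩).2 = ⟨t % b, h2⟩ := Fin.ext (Fin.coe_modNat _)
    simp only [vget, dif_pos ht, dif_pos h1, dif_pos h2, vkron, hdiv, hmod]
  · have h1 : a ≤ t / b := (Nat.le_div_iff_mul_le hb).2 (by omega)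
    rw [vget_of_ge _ (by omega), vget_of_ge u h1, zero_mul]

end FlatIndex

lemma div_pow_div_pow {n a b c : ℕ} (h : a + c = b) (t : ℕ) : t / n ^ c / n ^ a = t / n ^ b := by
  rw [Nat.div_div_eq_div_mul, ← pow_add, Nat.add_comm c a, h]

lemma div_pow_mod_pow {n a b c : ℕ} (h : a + c = b) (t : ℕ) :
    t / n ^ c % n ^ a = t % n ^ b / n ^ c := by
  rw [← Nat.mod_mul_right_div_self, ← pow_add, Nat.add_comm c a, h]

lemma mod_pow_mod_pow {n a b : ℕ} (h : a ≤ b) (t : ℕ) : t % n ^ b % n ^ a = t % n ^ a :=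
  Nat.mod_mod_of_dvd _ (pow_dvd_pow n h)

lemma mod_pow_div_pow_mod {n N i : ℕ} (hi : i < N) (t : ℕ) :
    t % n ^ N / n ^ (N - 1 - i) % n = t / n ^ (N - 1 - i) % n := by
  have h := div_pow_mod_pow (n := n) (a := 1) (b := N - i) (c := N - 1 - i) (by omega)
  rw [pow_one] at h
  rw [h, h, mod_pow_mod_pow (by omega)]

lemma vget_vkron_vkron {n a c : ℕ} (u : Fin a → ℝ) (w : Fin n → ℝ) (v : Fin (n ^ c) → ℝ)
    (t : ℕ) :
    vget (vkron u (vkron w v)) t =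
      vget u (t / n ^ (c + 1)) * (vget w (t / n ^ c % n) * vget v (t % n ^ c)) := by
  have hdm := div_pow_mod_pow (n := n) (a := 1) (b := c + 1) (c := c) (by omega) t
  rw [pow_one] at hdm
  rw [vget_vkron, vget_vkron, ← pow_succ', hdm, mod_pow_mod_pow (Nat.le_succ c)]

section KroneckerPower

variable {n : ℕ} (x : Fin n → ℝ)

lemma vget_vpow_zero (t : ℕ) : vget (vpow x 0) t = if t = 0 then 1 else 0 := by
  rcases t with _ | t
  · simp [vget, vpow]
  · rw [vget_of_ge _ (by simp), if_neg t.succ_ne_zero]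

lemma vget_vpow_succ (m t : ℕ) :
    vget (vpow x (m + 1)) t = vget x (t / n ^ m) * vget (vpow x m) (t % n ^ m) := by
  rw [vpow, vget_castV, vget_vkron]

lemma vget_vpow_zero_div_mul_mod (w : Fin n → ℝ) (q : ℕ) :
    vget (vpow x 0) (q / n) * vget w (q % n) = vget w q := by
  rcases Nat.eq_zero_or_pos n with rfl | hn
  · rw [vget_of_ge w (Nat.zero_le _), vget_of_ge w (Nat.zero_le _), mul_zero]
  rcases lt_or_ge q n with hq | hq
  · rw [Nat.div_eq_of_lt hq, Nat.mod_eq_of_lt hq, vget_vpow_zero, if_pos rfl, one_mul]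
  · rw [vget_vpow_zero, if_neg (Nat.div_pos hq hn).ne', zero_mul, vget_of_ge w hq]

lemma vget_vpow_add (a b t : ℕ) :
    vget (vpow x (a + b)) t = vget (vpow x a) (t / n ^ b) * vget (vpow x b) (t % n ^ b) := by
  induction a generalizing t with
  | zero =>
    rw [Nat.zero_add]
    rcases lt_or_ge t (n ^ b) with ht | ht
    · rw [Nat.div_eq_of_lt ht, Nat.mod_eq_of_lt ht, vget_vpow_zero, if_pos rfl, one_mul]
    · rcases Nat.eq_zero_or_pos (n ^ b) with hb | hb
      · rw [vget_of_ge (vpow x b) (by simp [hb]), vget_of_ge (vpow x b) (by simp [hb]), mul_zero]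
      · rw [vget_of_ge _ ht, vget_vpow_zero, if_neg (Nat.div_pos ht hb).ne', zero_mul]
  | succ a ih =>
    rw [Nat.add_right_comm, vget_vpow_succ, ih, vget_vpow_succ, div_pow_div_pow rfl,
      div_pow_mod_pow rfl, mod_pow_mod_pow (Nat.le_add_left b a), mul_assoc]

lemma castV_vpow {a b : ℕ} (hab : a = b) (h : n ^ a = n ^ b) : castV h (vpow x a) = vpow x b := by
  subst hab; rfl

lemma castV_vpow_add_add {e a b c : ℕ} (he : e = a + (b + c))
    (h : n ^ e = n ^ a * (n ^ b * n ^ c)) :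
    castV h (vpow x e) = vkron (vpow x a) (vkron (vpow x b) (vpow x c)) := by
  subst he
  refine eq_of_vget_eq fun t => ?_
  rw [vget_castV, vget_vpow_add, vget_vpow_add, vget_vkron, vget_vkron, pow_add]

end KroneckerPower

lemma mkron_mulVec_vkron {a b c d : ℕ} (P : Matrix (Fin a) (Fin b) ℝ)
    (Q : Matrix (Fin c) (Fin d) ℝ) (u : Fin b → ℝ) (v : Fin d → ℝ) :
    (mkron P Q) *ᵥ (vkron u v) = vkron (P *ᵥ u) (Q *ᵥ v) := by
  funext i
  simp only [mulVec, dotProduct, vkron, mkron, Finset.sum_mul_sum]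
  rw [← Equiv.sum_comp finProdFinEquiv, Fintype.sum_prod_type]
  simp only [Equiv.symm_apply_apply]
  exact Finset.sum_congr rfl fun _ _ => Finset.sum_congr rfl fun _ _ => by ring

lemma castM_mulVec {a b a' b' : ℕ} (ha : a = a') (hb : b = b')
    (M : Matrix (Fin a) (Fin b) ℝ) (w : Fin b' → ℝ) :
    (castM ha hb M) *ᵥ w = castV ha (M *ᵥ castV hb.symm w) := by
  subst ha hb; rfl

lemma mul_castM {a b c c' : ℕ} (hc : c = c') (M : Matrix (Fin a) (Fin b) ℝ)
    (N : Matrix (Fin b) (Fin c) ℝ) : M * castM rfl hc N = castM rfl hc (M * N) := by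
  subst hc; rfl

lemma castM_mulVec_vpow {n a b c : ℕ} (hbc : b = c) (h : n ^ b = n ^ c)
    (M : Matrix (Fin a) (Fin (n ^ b)) ℝ) (x : Fin n → ℝ) :
    castM rfl h M *ᵥ vpow x c = M *ᵥ vpow x b := by
  subst hbc; rfl

section Derivative

variable {n : ℕ}

def vkronLeftCLM {a b : ℕ} (w : Fin b → ℝ) : (Fin a → ℝ) →L[ℝ] (Fin (a * b) → ℝ) :=
  LinearMap.toContinuousLinearMap
    { toFun := fun u => vkron u w
      map_add' := fun u v => by funext i; simp [vkron, add_mul]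
      map_smul' := fun r u => by funext i; simp [vkron, mul_assoc] }

def vkronRightCLM {a b : ℕ} (u : Fin a → ℝ) : (Fin b → ℝ) →L[ℝ] (Fin (a * b) → ℝ) :=
  LinearMap.toContinuousLinearMap
    { toFun := fun w => vkron u w
      map_add' := fun w v => by funext i; simp [vkron, mul_add]
      map_smul' := fun r w => by funext i; simp [vkron, mul_left_comm] }

def castVCLM {a b : ℕ} (h : a = b) : (Fin a → ℝ) →L[ℝ] (Fin b → ℝ) :=
  LinearMap.toContinuousLinearMap
    { toFun := castV h
      map_add' := fun _ _ => rfl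
      map_smul' := fun _ _ => rfl }

/-- The derivative of `y ↦ y^{[m]}` at `x`, by the product rule on `y^{[m+1]} = y ⊗ y^{[m]}`. -/
def vpowDeriv (x : Fin n → ℝ) : (m : ℕ) → (Fin n → ℝ) →L[ℝ] (Fin (n ^ m) → ℝ)
  | 0 => 0
  | m + 1 => (castVCLM (pow_succ' n m).symm).comp
      (vkronLeftCLM (vpow x m) + (vkronRightCLM x).comp (vpowDeriv x m))

lemma vpowDeriv_succ_apply (x v : Fin n → ℝ) (m : ℕ) :
    vpowDeriv x (m + 1) v =
      castV (pow_succ' n m).symm (vkron v (vpow x m) + vkron x (vpowDeriv x m v)) :=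
  rfl

lemma hasFDerivAt_vpow (x : Fin n → ℝ) (m : ℕ) :
    HasFDerivAt (fun y => vpow y m) (vpowDeriv x m) x := by
  induction m with
  | zero => exact hasFDerivAt_const _ x
  | succ m ih =>
    refine hasFDerivAt_pi'.2 fun i => ?_
    set i' : Fin (n * n ^ m) := Fin.cast (pow_succ' n m) i
    have hfst := hasFDerivAt_pi'.1 (hasFDerivAt_id (𝕜 := ℝ) x) i'.divNat
    have hsnd := hasFDerivAt_pi'.1 ih i'.modNat
    refine (hfst.mul hsnd).congr_fderiv (ContinuousLinearMap.ext fun v => ?_)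
    change x i'.divNat * vpowDeriv x m v i'.modNat + vpow x m i'.modNat * v i'.divNat =
      v i'.divNat * vpow x m i'.modNat + x i'.divNat * vpowDeriv x m v i'.modNat
    ring

/-- `D(x^{[N]}) v = ∑_{i<N} x^{[i]} ⊗ v ⊗ x^{[N-1-i]}`, read at the flat index `t`. -/
lemma vget_vpowDeriv (x v : Fin n → ℝ) (N t : ℕ) :
    vget (vpowDeriv x N v) t = ∑ i ∈ Finset.range N,
      vget (vpow x i) (t / n ^ (N - i)) *
        (vget v (t / n ^ (N - 1 - i) % n) * vget (vpow x (N - 1 - i)) (t % n ^ (N - 1 - i))) := by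
  induction N generalizing t with
  | zero =>
    rw [show vpowDeriv x 0 v = 0 from rfl, Finset.sum_range_zero]
    simp [vget]
  | succ N ih =>
    rw [vpowDeriv_succ_apply, vget_castV, vget_add, vget_vkron, vget_vkron, ih,
      Finset.sum_range_succ', Finset.mul_sum, add_comm]
    congr 1
    · refine Finset.sum_congr rfl fun i hi => ?_
      have hiN := Finset.mem_range.1 hi
      rw [show N + 1 - (i + 1) = N - i by omega, show N + 1 - 1 - (i + 1) = N - 1 - i by omega,
        vget_vpow_succ, div_pow_div_pow (show i + (N - i) = N by omega),
        div_pow_mod_pow (show i + (N - i) = N by omega), mod_pow_div_pow_mod hiN,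
        mod_pow_mod_pow (show N - 1 - i ≤ N by omega)]
      ring
    · rw [Nat.sub_zero, Nat.add_sub_cancel, Nat.sub_zero,
        ← div_pow_div_pow (show 1 + N = N + 1 by omega), pow_one, ← mul_assoc,
        vget_vpow_zero_div_mul_mod]

end Derivative

lemma Bmat_mulVec_vpow {n : ℕ} (x : Fin n → ℝ) (k N : ℕ) (hk : 2 ≤ k)
    (A : Matrix (Fin n) (Fin (n ^ (k - 1))) ℝ) :
    Bmat k N hk A *ᵥ vpow x (N + k - 2) = vpowDeriv x N (A *ᵥ vpow x (k - 1)) := by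
  refine eq_of_vget_eq fun t => ?_
  rw [vget_vpowDeriv, Bmat, sum_mulVec, vget_sum, ← Fin.sum_univ_eq_sum_range]
  refine Finset.sum_congr rfl fun i _ => ?_
  have hi := i.isLt
  rw [castM_mulVec, castV_vpow_add_add x (show N + k - 2 = i + ((k - 1) + (N - 1 - i)) by omega),
    mkron_mulVec_vkron, mkron_mulVec_vkron, one_mulVec, one_mulVec, vget_castV, vget_vkron_vkron,
    show N - 1 - i + 1 = N - i by omega]

lemma lieD_mulVec {n a : ℕ} (C : Matrix (Fin a) (Fin n) ℝ) (f : (Fin n → ℝ) → Fin n → ℝ)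
    (x : Fin n → ℝ) : lieD f (fun y => C *ᵥ y) x = C *ᵥ f x := by
  rw [lieD, HasFDerivAt.fderiv (f := fun y => C *ᵥ y)
    (LinearMap.toContinuousLinearMap (mulVecLin C)).hasFDerivAt]
  rfl

lemma lieD_mulVec_vpow {n a N : ℕ} (M : Matrix (Fin a) (Fin (n ^ N)) ℝ)
    (f : (Fin n → ℝ) → Fin n → ℝ) (x : Fin n → ℝ) :
    lieD f (fun y => M *ᵥ vpow y N) x = M *ᵥ vpowDeriv x N (f x) := by
  rw [lieD, HasFDerivAt.fderiv (f := fun y => M *ᵥ vpow y N)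
    ((LinearMap.toContinuousLinearMap (mulVecLin M)).hasFDerivAt.comp x (hasFDerivAt_vpow x N))]
  rfl

lemma two_mul_le_sum_range {k : ℕ → ℕ} (hk : ∀ i, 2 ≤ k i) (p : ℕ) :
    2 * p ≤ ∑ t ∈ Finset.range p, k t := by
  simpa [mul_comm] using Finset.card_nsmul_le_sum (Finset.range p) k 2 fun i _ => hk i

theorem mLieN_succ_eq_mulVec_vpow {n m : ℕ} (k : ℕ → ℕ) (hk : ∀ i, 2 ≤ k i)
    (A : (i : ℕ) → Matrix (Fin n) (Fin (n ^ (k i - 1))) ℝ)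
    (C : Matrix (Fin m) (Fin n) ℝ) (p : ℕ) (x : Fin n → ℝ) :
    mLieN (fun p y => A p *ᵥ vpow y (k p - 1)) (fun y => C *ᵥ y) (p + 1) x =
      (C * A 0 * Mchain k hk A p) *ᵥ
        vpow x ((∑ t ∈ Finset.range (p + 1), k t) - (2 * (p + 1) - 1)) := by
  induction p generalizing x with
  | zero =>
    rw [mLieN, mLieN, lieD_mulVec, Mchain, mul_castM, castM_mulVec_vpow (by simp), Matrix.mul_one,
      mulVec_mulVec]
  | succ p ih =>
    have hsum := two_mul_le_sum_range hk (p + 1)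
    have hkp := hk (p + 1)
    rw [mLieN, funext ih, lieD_mulVec_vpow, ← Bmat_mulVec_vpow, mulVec_mulVec, Mchain, mul_castM,
      castM_mulVec_vpow (by rw [Finset.sum_range_succ _ (p + 1)]; omega), Matrix.mul_assoc]

/-- For `j ≥ 2`, vector fields `f_{k_i}(x) = A_{k_i} x^{[k_i-1]}` with
`k_i ≥ 2` (0-based: `k 0 = k₁`, …, `k (j-1) = k_j`) and `g(x) = C x`,
`L_{f_{k_j}} ⋯ L_{f_{k₂}} L_{f_{k₁}} g(x) =
  C A_{k₁} B_{k₂k₁} B_{k₃k₂k₁} ⋯ B_{k_j⋯k₂k₁} x^{[k₁+⋯+k_j-(2j-1)]}`,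
where `B_{k_p⋯k₂k₁} = Σ_{i=1}^{N_p} I ⊗ ⋯ ⊗ A_{k_p} ⊗ ⋯ ⊗ I` with
`N_p = k₁+⋯+k_{p-1} - (2p-3)`. -/
theorem mixed_lie_derivative_chain (n m j : ℕ) (hj : 2 ≤ j) (k : ℕ → ℕ) (hk : ∀ i, 2 ≤ k i)
    (A : (i : ℕ) → Matrix (Fin n) (Fin (n ^ (k i - 1))) ℝ)
    (C : Matrix (Fin m) (Fin n) ℝ) (x : Fin n → ℝ) :
    mLieN (fun p y => (A p).mulVec (vpow y (k p - 1))) (fun y => C.mulVec y) j x =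
      (C * A 0 *
          castM rfl (by have hjj : j - 1 + 1 = j := Nat.sub_add_cancel (by omega); rw [hjj])
            (Mchain k hk A (j - 1))).mulVec
        (vpow x ((∑ t ∈ Finset.range j, k t) - (2 * j - 1))) := by
  obtain ⟨p, rfl⟩ : ∃ p, j = p + 1 := ⟨j - 1, by omega⟩
  exact mLieN_succ_eq_mulVec_vpow k hk A C p x
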